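/- arXiv:math/0211011 — 3 statements merged into one kernel-verified Lean document; each statement's English description precedes it below -/
import Mathlib

section
/- Every member of the interval multilinear polynomial matrix family lies in the convex hull of its vertex set: MA ⊆ convexHull ℝ (K_MA). Equivalently, for every q ∈ Q, the matrix ∑_{i=1}^N a_i(q) • A_i belongs to the convex hull (over ℝ) of the set {∑_{i=1}^N a_i(v) • A_i : v ∈ V}. -/
/-!
A multiaffine map restricted to a coordinate line is affine, so if `q k` lies between `qL k`
and `qU k`, the value at `q` lies on the segment between the values at the two points obtained by
moving `q k` to `qL k` and to `qU k`. Pushing the coordinates to the endpoints one at a time, and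
using that convex hulls are convex, puts the value at any point of the box in the convex hull of
the values at the vertices.
-/

open Polynomial Function

variable {ι E : Type*} [DecidableEq ι] [AddCommGroup E] [Module ℝ E]

def IsMultiaffine (f : (ι → ℝ) → E) : Prop :=
  ∀ (k : ι) (q : ι → ℝ), ∃ c d : E, ∀ t : ℝ, f (update q k t) = c + t • d

namespace IsMultiaffine

theorem smul_const {a : (ι → ℝ) → ℝ} (ha : IsMultiaffine a) (A : E) :
    IsMultiaffine fun q => a q • A := by
  intro k q
  obtain ⟨c, d, h⟩ := ha k q
  exact ⟨c • A, d • A, fun t => by simp only [h, add_smul, smul_eq_mul, mul_smul]⟩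

theorem sum {κ : Type*} {s : Finset κ} {f : κ → (ι → ℝ) → E}
    (hf : ∀ i ∈ s, IsMultiaffine (f i)) : IsMultiaffine fun q => ∑ i ∈ s, f i q := by
  intro k q
  choose c d h using fun (i : κ) (hi : i ∈ s) => hf i hi k q
  refine ⟨∑ i ∈ s.attach, c i i.2, ∑ i ∈ s.attach, d i i.2, fun t => ?_⟩
  rw [Finset.smul_sum, ← Finset.sum_add_distrib]
  show ∑ i ∈ s, f i (update q k t) = _
  rw [← Finset.sum_attach s]
  exact Finset.sum_congr rfl fun i _ => h i i.2 t

theorem mem_segment_update {f : (ι → ℝ) → E} (hf : IsMultiaffine f) (k : ι) (q : ι → ℝ)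
    {x y : ℝ} (hq : q k ∈ segment ℝ x y) :
    f q ∈ segment ℝ (f (update q k x)) (f (update q k y)) := by
  obtain ⟨c, d, h⟩ := hf k q
  have hfq : f q = c + q k • d := by simpa using h (q k)
  obtain ⟨α, β, hα, hβ, hαβ, hqk⟩ := hq
  refine ⟨α, β, hα, hβ, hαβ, ?_⟩
  rw [h, h, hfq, ← hqk]
  linear_combination (norm := module) hαβ • c

end IsMultiaffine

def boxVertices (qL qU : ι → ℝ) : Set (ι → ℝ) :=
  {v | ∀ i, v i = qL i ∨ v i = qU i}

theorem IsMultiaffine.mem_convexHull_image_boxVertices_of_forall_notMem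
    {f : (ι → ℝ) → E} (hf : IsMultiaffine f) {qL qU : ι → ℝ} (s : Finset ι)
    {q : ι → ℝ}
    (hQ : ∀ i, q i ∈ Set.Icc (qL i) (qU i)) (hV : ∀ i ∉ s, q i = qL i ∨ q i = qU i) :
    f q ∈ convexHull ℝ (f '' boxVertices qL qU) := by
  induction s using Finset.induction_on generalizing q with
  | empty => exact subset_convexHull ℝ _ ⟨q, fun i => hV i (Finset.notMem_empty i), rfl⟩
  | @insert k s _ ih =>
    have hQ' : ∀ x ∈ Set.Icc (qL k) (qU k), ∀ i, update q k x i ∈ Set.Icc (qL i) (qU i) :=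
      fun x hx i => by rcases eq_or_ne i k with rfl | hi <;> simp [*]
    have hV' : ∀ x, x = qL k ∨ x = qU k →
        ∀ i ∉ s, update q k x i = qL i ∨ update q k x i = qU i :=
      fun x hx i hi => by rcases eq_or_ne i k with rfl | hik <;> simp_all
    have hL := ih (hQ' _ (Set.left_mem_Icc.2 ((hQ k).1.trans (hQ k).2))) (hV' _ (.inl rfl))
    have hU := ih (hQ' _ (Set.right_mem_Icc.2 ((hQ k).1.trans (hQ k).2))) (hV' _ (.inr rfl))
    exact (convex_convexHull ℝ _).segment_subset hL hU
      (hf.mem_segment_update k q (Icc_subset_segment (hQ k)))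

theorem IsMultiaffine.mem_convexHull_image_boxVertices [Fintype ι] {f : (ι → ℝ) → E}
    (hf : IsMultiaffine f) {qL qU q : ι → ℝ} (hQ : ∀ i, q i ∈ Set.Icc (qL i) (qU i)) :
    f q ∈ convexHull ℝ (f '' boxVertices qL qU) :=
  hf.mem_convexHull_image_boxVertices_of_forall_notMem Finset.univ hQ
    fun i hi => absurd (Finset.mem_univ i) hi

theorem MA_subset_convexHull_vertices_general
    (m N n : ℕ)
    (qL qU : Fin m → ℝ)
    (a : Fin N → (Fin m → ℝ) → ℝ)
    (ha : ∀ (i : Fin N) (k : Fin m) (q : Fin m → ℝ), ∃ c d : ℝ,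
      ∀ t : ℝ, a i (Function.update q k t) = c + d * t)
    (A : Fin N → Matrix (Fin n) (Fin n) ℝ[X]) :
    {M : Matrix (Fin n) (Fin n) ℝ[X] |
        ∃ q : Fin m → ℝ, (∀ i, q i ∈ Set.Icc (qL i) (qU i)) ∧ M = ∑ i, a i q • A i}
      ⊆ convexHull ℝ
        {M : Matrix (Fin n) (Fin n) ℝ[X] |
          ∃ q : Fin m → ℝ, (∀ i, q i = qL i ∨ q i = qU i) ∧ M = ∑ i, a i q • A i} := by
  rintro M ⟨q, hQ, rfl⟩
  have ha' (i : Fin N) : IsMultiaffine (a i) := fun k q => by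
    obtain ⟨c, d, h⟩ := ha i k q
    exact ⟨c, d, fun t => by rw [h, smul_eq_mul, mul_comm]⟩
  have hf : IsMultiaffine fun q => ∑ i, a i q • A i :=
    IsMultiaffine.sum fun i _ => (ha' i).smul_const (A i)
  refine convexHull_mono ?_ (hf.mem_convexHull_image_boxVertices hQ)
  rintro _ ⟨v, hv, rfl⟩
  exact ⟨v, hv, rfl⟩

/-- Every member of the interval multilinear polynomial matrix
family lies in the convex hull of its vertex set: `MA ⊆ convexHull ℝ K_MA`. -/
theorem MA_subset_convexHull_vertices
    (m N n : ℕ)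
    (qL qU : Fin m → ℝ) (hq : ∀ i, qL i ≤ qU i)
    (a : Fin N → (Fin m → ℝ) → ℝ)
    (ha : ∀ (i : Fin N) (k : Fin m) (q : Fin m → ℝ), ∃ c d : ℝ,
      ∀ t : ℝ, a i (Function.update q k t) = c + d * t)
    (A : Fin N → Matrix (Fin n) (Fin n) ℝ[X]) :
    {M : Matrix (Fin n) (Fin n) ℝ[X] |
        ∃ q : Fin m → ℝ, (∀ i, q i ∈ Set.Icc (qL i) (qU i)) ∧ M = ∑ i, a i q • A i}
      ⊆ convexHull ℝ
        {M : Matrix (Fin n) (Fin n) ℝ[X] |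
          ∃ q : Fin m → ℝ, (∀ i, q i = qL i ∨ q i = qU i) ∧ M = ∑ i, a i q • A i} :=
  MA_subset_convexHull_vertices_general m N n qL qU a ha A
end

section
/- Let B ∈ Matrix (Fin 2) (Fin 2) ℂ be Hermitian, and let u, r, n, K ∈ ℕ. Let R ∈ Matrix (Fin 2 × Fin u) (Fin r) ℂ and Q ∈ Matrix (Fin 2 × Fin u) (Fin n) ℂ be arbitrary, and for i = 1, …, K let ℬ_i ∈ Matrix (Fin n) (Fin r) ℂ and let P_i ∈ Matrix (Fin u) (Fin u) ℂ be Hermitian positive definite, such that for each i the Hermitian matrix Rᴴ (B ⊗ P_i) R + ℬ_iᴴ Qᴴ R + Rᴴ Q ℬ_i is negative definite (here ⊗ is the Kronecker product, so B ⊗ P_i ∈ Matrix (Fin 2 × Fin u) (Fin 2 × Fin u) ℂ, and ᴴ denotes conjugate transpose). Then for all nonnegative reals λ_1, …, λ_K with ∑_{i=1}^K λ_i = 1: (a) P := ∑_{i=1}^K λ_i P_i is Hermitian positive definite, and (b) for every nonzero x ∈ ℂ^r with (∑_{i=1}^K λ_i ℬ_i).mulVec x = 0, one has re(xᴴ ·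 (Rᴴ (B ⊗ P) R).mulVec x) < 0. -/
open Matrix Kronecker

/-- A complex matrix is positive definite if it is Hermitian and
`re (xᴴ M x) > 0` for every nonzero vector `x`. -/
def IsCPosDef {ι : Type*} [Fintype ι] (M : Matrix ι ι ℂ) : Prop :=
  M.IsHermitian ∧ ∀ x : ι → ℂ, x ≠ 0 → 0 < (star x ⬝ᵥ M.mulVec x).re

/-- A complex matrix is negative definite if `-M` is positive definite. -/
def IsCNegDef {ι : Type*} [Fintype ι] (M : Matrix ι ι ℂ) : Prop :=
  IsCPosDef (-M)

/-! The map `(P, ℬ) ↦ Rᴴ (B ⊗ P) R + ℬᴴ Qᴴ R + Rᴴ Q ℬ` is real-linear, so at a convex combination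
of vertices it is the same convex combination of the negative definite vertex LMI matrices, hence
negative definite. On the null space of `ℬ = ∑ λᵢ ℬᵢ` the two cross terms contribute nothing to
the quadratic form, leaving `xᴴ Rᴴ (B ⊗ P) R x < 0`. -/

theorem Finset.sum_mul_pos_of_sum_eq_one {ι : Type*} [Fintype ι] {w f : ι → ℝ}
    (hw : ∀ i, 0 ≤ w i) (h1 : ∑ i, w i = 1) (hf : ∀ i, 0 < f i) : 0 < ∑ i, w i * f i := by
  obtain ⟨j, -, hj⟩ := Finset.exists_ne_zero_of_sum_ne_zero (h1 ▸ one_ne_zero)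
  exact Finset.sum_pos' (fun i _ => mul_nonneg (hw i) (hf i).le)
    ⟨j, Finset.mem_univ j, mul_pos ((hw j).lt_of_ne' hj) (hf j)⟩

theorem Matrix.kronecker_sum {ι l m n p α : Type*} [CommSemiring α] (A : Matrix l m α)
    (s : Finset ι) (B : ι → Matrix n p α) : A ⊗ₖ ∑ i ∈ s, B i = ∑ i ∈ s, A ⊗ₖ B i :=
  map_sum (kroneckerBilinear (R := α) A) B s

section

variable {ι r : Type*} [Fintype ι] [Fintype r]

theorem Matrix.re_star_dotProduct_sum_smul_mulVec (w : ι → ℝ) (A : ι → Matrix r r ℂ)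
    (x : r → ℂ) :
    (star x ⬝ᵥ (∑ i, (w i : ℂ) • A i) *ᵥ x).re = ∑ i, w i * (star x ⬝ᵥ A i *ᵥ x).re := by
  simp only [sum_mulVec, dotProduct_sum, smul_mulVec, dotProduct_smul, Complex.re_sum,
    smul_eq_mul, Complex.re_ofReal_mul]

theorem IsCPosDef.sum_smul {P : ι → Matrix r r ℂ} (hP : ∀ i, IsCPosDef (P i)) {w : ι → ℝ}
    (hw : ∀ i, 0 ≤ w i) (h1 : ∑ i, w i = 1) : IsCPosDef (∑ i, (w i : ℂ) • P i) :=
  ⟨isSelfAdjoint_sum _ fun i _ => (hP i).1.smul (Complex.conj_ofReal _), fun x hx => by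
    rw [re_star_dotProduct_sum_smul_mulVec]
    exact Finset.sum_mul_pos_of_sum_eq_one hw h1 fun i => (hP i).2 x hx⟩

theorem IsCNegDef.sum_smul {M : ι → Matrix r r ℂ} (hM : ∀ i, IsCNegDef (M i)) {w : ι → ℝ}
    (hw : ∀ i, 0 ≤ w i) (h1 : ∑ i, w i = 1) : IsCNegDef (∑ i, (w i : ℂ) • M i) := by
  simpa only [IsCNegDef, smul_neg, Finset.sum_neg_distrib] using IsCPosDef.sum_smul hM hw h1

theorem IsCNegDef.re_star_dotProduct_mulVec_neg {M : Matrix r r ℂ} (hM : IsCNegDef M)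
    {x : r → ℂ} (hx : x ≠ 0) : (star x ⬝ᵥ M *ᵥ x).re < 0 := by
  simpa [neg_mulVec] using hM.2 x hx

end

section

variable {ι a u r n : Type*} [Fintype a] [Fintype u] [Fintype n]

def lmiMatrix (B : Matrix a a ℂ) (R : Matrix (a × u) r ℂ) (Q : Matrix (a × u) n ℂ)
    (P : Matrix u u ℂ) (ℬ : Matrix n r ℂ) : Matrix r r ℂ :=
  Rᴴ * (B ⊗ₖ P) * R + ℬᴴ * Qᴴ * R + Rᴴ * Q * ℬ

theorem lmiMatrix_sum_smul [Fintype ι] (B : Matrix a a ℂ) (R : Matrix (a × u) r ℂ)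
    (Q : Matrix (a × u) n ℂ) (P : ι → Matrix u u ℂ) (ℬ : ι → Matrix n r ℂ) (w : ι → ℝ) :
    lmiMatrix B R Q (∑ i, (w i : ℂ) • P i) (∑ i, (w i : ℂ) • ℬ i) =
      ∑ i, (w i : ℂ) • lmiMatrix B R Q (P i) (ℬ i) := by
  simp [lmiMatrix, Finset.sum_add_distrib, Matrix.mul_sum, Matrix.sum_mul, conjTranspose_sum,
    kronecker_sum, kronecker_smul]

theorem star_dotProduct_lmiMatrix_mulVec_of_mulVec_eq_zero [Fintype r] (B : Matrix a a ℂ)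
    (R : Matrix (a × u) r ℂ) (Q : Matrix (a × u) n ℂ) (P : Matrix u u ℂ) {ℬ : Matrix n r ℂ}
    {x : r → ℂ} (hx : ℬ *ᵥ x = 0) :
    star x ⬝ᵥ lmiMatrix B R Q P ℬ *ᵥ x = star x ⬝ᵥ (Rᴴ * (B ⊗ₖ P) * R) *ᵥ x := by
  simp [lmiMatrix, add_mulVec, ← mulVec_mulVec, hx, dotProduct_mulVec, ← star_mulVec]

end

theorem convex_combination_LMI_general
    (u r n K : ℕ)
    (B : Matrix (Fin 2) (Fin 2) ℂ)
    (R : Matrix (Fin 2 × Fin u) (Fin r) ℂ)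
    (Q : Matrix (Fin 2 × Fin u) (Fin n) ℂ)
    (ℬ : Fin K → Matrix (Fin n) (Fin r) ℂ)
    (P : Fin K → Matrix (Fin u) (Fin u) ℂ)
    (hP : ∀ i, IsCPosDef (P i))
    (hLMI : ∀ i,
      IsCNegDef (Rᴴ * (B ⊗ₖ P i) * R + (ℬ i)ᴴ * Qᴴ * R + Rᴴ * Q * ℬ i))
    (lam : Fin K → ℝ) (hlam : ∀ i, 0 ≤ lam i) (hsum : ∑ i, lam i = 1) :
    IsCPosDef (∑ i, (lam i : ℂ) • P i) ∧
    ∀ x : Fin r → ℂ, x ≠ 0 → (∑ i, (lam i : ℂ) • ℬ i).mulVec x = 0 →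
      (star x ⬝ᵥ (Rᴴ * (B ⊗ₖ ∑ i, (lam i : ℂ) • P i) * R).mulVec x).re < 0 := by
  refine ⟨IsCPosDef.sum_smul hP hlam hsum, fun x hx hnull => ?_⟩
  have hneg := (IsCNegDef.sum_smul (M := fun i => lmiMatrix B R Q (P i) (ℬ i)) hLMI hlam
    hsum).re_star_dotProduct_mulVec_neg hx
  rwa [← lmiMatrix_sum_smul, star_dotProduct_lmiMatrix_mulVec_of_mulVec_eq_zero _ _ _ _ hnull]
    at hneg

/-- vertex LMI feasibility propagates to convex combinations of the
vertex coefficient matrices, restricted to the null space of the combined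
coefficient matrix (the convexity step in the proof of Theorem 2). -/
theorem convex_combination_LMI
    (u r n K : ℕ)
    (B : Matrix (Fin 2) (Fin 2) ℂ) (hB : B.IsHermitian)
    (R : Matrix (Fin 2 × Fin u) (Fin r) ℂ)
    (Q : Matrix (Fin 2 × Fin u) (Fin n) ℂ)
    (ℬ : Fin K → Matrix (Fin n) (Fin r) ℂ)
    (P : Fin K → Matrix (Fin u) (Fin u) ℂ)
    (hP : ∀ i, IsCPosDef (P i))
    (hLMI : ∀ i,
      IsCNegDef (Rᴴ * (B ⊗ₖ P i) * R + (ℬ i)ᴴ * Qᴴ * R + Rᴴ * Q * ℬ i))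
    (lam : Fin K → ℝ) (hlam : ∀ i, 0 ≤ lam i) (hsum : ∑ i, lam i = 1) :
    IsCPosDef (∑ i, (lam i : ℂ) • P i) ∧
    ∀ x : Fin r → ℂ, x ≠ 0 → (∑ i, (lam i : ℂ) • ℬ i).mulVec x = 0 →
      (star x ⬝ᵥ (Rᴴ * (B ⊗ₖ ∑ i, (lam i : ℂ) • P i) * R).mulVec x).re < 0 :=
  convex_combination_LMI_general u r n K B R Q ℬ P hP hLMI lam hlam hsum
end

section
/- (Theorem 4) Assume hypothesis H (the cited quadratic-stability lemma of Henrion et al., stated in the context). Suppose every polynomial p_{ij}^{(t)} has degree at most l, and that det M ≠ 0 for every member M of PA. The vertex set K_PA is finite; for each vertex matrix F ∈ K_PA write F(s) = F_0 + F_1 s + ⋯ + F_l s^l and let ℱ = (F_0, …, F_l) be its coefficient matrix. If there exist a matrix Q ∈ Matrix (Fin (2nl)) (Fin n) ℂ and, for each F ∈ K_PA, a Hermitian positive definite matrix P_F ∈ Matrix (Fin (nl)) (Fin (nl)) ℂ such that the Hermitian matrix Rᴴ (B ⊗ P_F) R + ℱᴴ Qᴴ R + Rᴴ Q ℱ is negative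 definite, then every member of PA is D_B-stable; that is, PA is robustly D_B-stable. -/
open Polynomial Matrix Kronecker

/-- The LMI region associated with the Hermitian matrix `B`. -/
def DRegion (B : Matrix (Fin 2) (Fin 2) ℂ) : Set ℂ :=
  {s : ℂ | (star ![1, s] ⬝ᵥ B.mulVec ![1, s]).re < 0}

/-- A polynomial matrix is `D`-stable if its determinant is nonzero and all the
complex roots of its determinant lie in `D`. -/
def DStable {n : ℕ} (D : Set ℂ) (A : Matrix (Fin n) (Fin n) ℝ[X]) : Prop :=
  A.det ≠ 0 ∧ ∀ z : ℂ, aeval z A.det = 0 → z ∈ D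

/-- The structure matrix `R` of Definition 9: writing `x : ℂ^{(l+1)n}` in `l+1`
blocks `x_0, …, x_l` of size `n`, we have `R.mulVec x = (x_0,…,x_{l-1}; x_1,…,x_l)`. -/
noncomputable def structR (n l : ℕ) :
    Matrix (Fin 2 × Fin l × Fin n) (Fin (l + 1) × Fin n) ℂ :=
  fun p q => if (q.1 : ℕ) = (p.2.1 : ℕ) + (p.1 : ℕ) ∧ q.2 = p.2.2 then 1 else 0

/-- The coefficient matrix `𝒞 = (C_0, …, C_l)` of a polynomial matrix
`C(s) = C_0 + C_1 s + ⋯ + C_l s^l`, with real entries regarded as complex. -/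
noncomputable def coeffMat (n l : ℕ) (C : Matrix (Fin n) (Fin n) ℝ[X]) :
    Matrix (Fin n) (Fin (l + 1) × Fin n) ℂ :=
  fun i q => ((C i q.2).coeff (q.1 : ℕ) : ℂ)

/-- The polytopic polynomial matrix family generated by the vertex polynomials `p`. -/
def PAfam (n m : ℕ) (p : Fin n → Fin n → Fin m → ℝ[X]) :
    Set (Matrix (Fin n) (Fin n) ℝ[X]) :=
  {A | ∀ i j, A i j ∈ convexHull ℝ (Set.range (p i j))}

/-- The vertex set of the polytopic polynomial matrix family. -/
def KPA (n m : ℕ) (p : Fin n → Fin n → Fin m → ℝ[X]) :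
    Set (Matrix (Fin n) (Fin n) ℝ[X]) :=
  {A | ∀ i j, ∃ t, A i j = p i j t}

/-! Every member of `PA` is a convex combination of vertex matrices, and the vertex LMI is
jointly linear in `P` and in the coefficient matrix, so the set of polynomial matrices for
which it is feasible (with the common multiplier `Q`) is convex and hence contains all of
`PA`. For such a matrix `A` with certificate `P`, the terms `𝒜ᴴ Qᴴ R + Rᴴ Q 𝒜` vanish as
quadratic forms on the kernel of `𝒜`, so negative definiteness of the LMI gives exactly
the premise of hypothesis H. -/

theorem convexHull_setOf_forall_exists_eq {ι κ τ E : Type*} [Finite ι] [Finite κ]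
    [AddCommGroup E] [Module ℝ E] (f : ι → κ → τ → E) :
    convexHull ℝ {A : ι → κ → E | ∀ i j, ∃ t, A i j = f i j t} =
      {A | ∀ i j, A i j ∈ convexHull ℝ (Set.range (f i j))} := by
  have hpi : {A : ι → κ → E | ∀ i j, ∃ t, A i j = f i j t} =
      Set.univ.pi fun i => Set.univ.pi fun j => Set.range (f i j) := by
    ext A; simp only [Set.mem_ofPred_eq, Set.mem_univ_pi, Set.mem_range, eq_comm]
  rw [hpi, convexHull_pi]
  ext A; simp only [convexHull_pi, Set.mem_ofPred_eq, Set.mem_univ_pi]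

theorem PAfam_eq_convexHull_KPA (n m : ℕ) (p : Fin n → Fin n → Fin m → ℝ[X]) :
    PAfam n m p = convexHull ℝ (KPA n m p) :=
  (convexHull_setOf_forall_exists_eq p).symm

theorem degree_le_of_mem_PAfam {n m : ℕ} {p : Fin n → Fin n → Fin m → ℝ[X]} {d : WithBot ℕ}
    (hp : ∀ i j t, (p i j t).degree ≤ d) {A : Matrix (Fin n) (Fin n) ℝ[X]}
    (hA : A ∈ PAfam n m p) (i j : Fin n) : (A i j).degree ≤ d :=
  mem_degreeLE.1 <| convexHull_min (Set.range_subset_iff.2 fun t => mem_degreeLE.2 (hp i j t))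
    (degreeLE ℝ d).convex (hA i j)

noncomputable def coeffMatₗ (n l : ℕ) :
    Matrix (Fin n) (Fin n) ℝ[X] →ₗ[ℝ] Matrix (Fin n) (Fin (l + 1) × Fin n) ℂ where
  toFun := coeffMat n l
  map_add' F G := by ext; simp [coeffMat]
  map_smul' a F := by ext; simp [coeffMat]

section Definiteness

variable {ι : Type*} [Fintype ι]

theorem convex_setOf_isCPosDef : Convex ℝ {M : Matrix ι ι ℂ | IsCPosDef M} := by
  refine convex_iff_forall_pos.2 fun M hM N hN a b ha hb _ => ⟨?_, fun x hx => ?_⟩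
  · exact (hM.1.smul (IsSelfAdjoint.all a)).add (hN.1.smul (IsSelfAdjoint.all b))
  · rw [add_mulVec, Matrix.smul_mulVec, Matrix.smul_mulVec, dotProduct_add, dotProduct_smul,
      dotProduct_smul, Complex.add_re, Complex.smul_re, Complex.smul_re, smul_eq_mul, smul_eq_mul]
    exact add_pos (mul_pos ha (hM.2 x hx)) (mul_pos hb (hN.2 x hx))

theorem convex_setOf_isCNegDef : Convex ℝ {M : Matrix ι ι ℂ | IsCNegDef M} :=
  convex_setOf_isCPosDef.is_linear_preimage IsLinearMap.isLinearMap_neg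

theorem IsCNegDef.re_dotProduct_mulVec_neg {M : Matrix ι ι ℂ} (hM : IsCNegDef M) {x : ι → ℂ}
    (hx : x ≠ 0) : (star x ⬝ᵥ M *ᵥ x).re < 0 := by
  simpa [IsCNegDef, neg_mulVec] using hM.2 x hx

end Definiteness

section LMI

variable {α β γ δ : Type*} [Fintype α] [Fintype β] [Fintype δ]
  (R : Matrix (α × β) γ ℂ) (B : Matrix α α ℂ) (Q : Matrix (α × β) δ ℂ)

def lmiMat (P : Matrix β β ℂ) (C : Matrix δ γ ℂ) : Matrix γ γ ℂ :=
  Rᴴ * (B ⊗ₖ P) * R + Cᴴ * Qᴴ * R + Rᴴ * Q * C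

theorem lmiMat_add_smul (P₁ P₂ : Matrix β β ℂ) (C₁ C₂ : Matrix δ γ ℂ) (a b : ℝ) :
    lmiMat R B Q (a • P₁ + b • P₂) (a • C₁ + b • C₂) =
      a • lmiMat R B Q P₁ C₁ + b • lmiMat R B Q P₂ C₂ := by
  simp only [lmiMat, conjTranspose_add, conjTranspose_smul, star_trivial, kronecker_add,
    kronecker_smul, Matrix.add_mul, Matrix.mul_add, Matrix.smul_mul, Matrix.mul_smul, smul_add]
  abel

def lmiFeasible [Fintype γ] : Set (Matrix δ γ ℂ) :=
  {C | ∃ P : Matrix β β ℂ, IsCPosDef P ∧ IsCNegDef (lmiMat R B Q P C)}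

theorem convex_lmiFeasible [Fintype γ] : Convex ℝ (lmiFeasible (β := β) R B Q) := by
  rintro C₁ ⟨P₁, hP₁, hL₁⟩ C₂ ⟨P₂, hP₂, hL₂⟩ a b ha hb hab
  refine ⟨a • P₁ + b • P₂, convex_setOf_isCPosDef hP₁ hP₂ ha hb hab, ?_⟩
  rw [lmiMat_add_smul]
  exact convex_setOf_isCNegDef hL₁ hL₂ ha hb hab

theorem dotProduct_lmiMat_mulVec_of_mulVec_eq_zero [Fintype γ] (P : Matrix β β ℂ)
    {C : Matrix δ γ ℂ} {x : γ → ℂ} (hx : C *ᵥ x = 0) :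
    star x ⬝ᵥ lmiMat R B Q P C *ᵥ x = star x ⬝ᵥ (Rᴴ * (B ⊗ₖ P) * R) *ᵥ x := by
  have h₁ : star x ⬝ᵥ (Cᴴ * Qᴴ * R) *ᵥ x = 0 := by
    rw [Matrix.mul_assoc, ← mulVec_mulVec, dotProduct_mulVec, ← star_mulVec, hx, star_zero,
      zero_dotProduct]
  have h₂ : star x ⬝ᵥ (Rᴴ * Q * C) *ᵥ x = 0 := by
    rw [← mulVec_mulVec, hx, mulVec_zero, dotProduct_zero]
  simp only [lmiMat, add_mulVec, dotProduct_add, h₁, h₂, add_zero]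

end LMI

theorem polytopic_family_robust_DB_stable_general
    (n m l : ℕ)
    (B : Matrix (Fin 2) (Fin 2) ℂ)
    (p : Fin n → Fin n → Fin m → ℝ[X])
    (hpdeg : ∀ i j t, (p i j t).degree ≤ l)
    (hdet : ∀ M ∈ PAfam n m p, M.det ≠ 0)
    -- hypothesis H: the cited quadratic-stability lemma of Henrion et al.
    (hH : ∀ C : Matrix (Fin n) (Fin n) ℝ[X],
      (∀ i j, (C i j).degree ≤ l) → C.det ≠ 0 →
      (∃ P : Matrix (Fin l × Fin n) (Fin l × Fin n) ℂ, IsCPosDef P ∧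
        ∀ x : Fin (l + 1) × Fin n → ℂ, x ≠ 0 → (coeffMat n l C).mulVec x = 0 →
          (star x ⬝ᵥ ((structR n l)ᴴ * (B ⊗ₖ P) * structR n l).mulVec x).re < 0) →
      DStable (DRegion B) C)
    -- the vertex LMI feasibility data
    (Q : Matrix (Fin 2 × Fin l × Fin n) (Fin n) ℂ)
    (hLMI : ∀ F ∈ KPA n m p,
      ∃ P : Matrix (Fin l × Fin n) (Fin l × Fin n) ℂ, IsCPosDef P ∧
        IsCNegDef
          ((structR n l)ᴴ * (B ⊗ₖ P) * structR n l
            + (coeffMat n l F)ᴴ * Qᴴ * structR n l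
            + (structR n l)ᴴ * Q * coeffMat n l F)) :
    ∀ A ∈ PAfam n m p, DStable (DRegion B) A := by
  intro A hA
  have hKPA : KPA n m p ⊆ coeffMatₗ n l ⁻¹' lmiFeasible (structR n l) B Q := hLMI
  have hfeas : coeffMat n l A ∈ lmiFeasible (structR n l) B Q :=
    convexHull_min hKPA ((convex_lmiFeasible _ _ _).linear_preimage _)
      (PAfam_eq_convexHull_KPA n m p ▸ hA)
  obtain ⟨P, hP, hneg⟩ := hfeas
  refine hH A (degree_le_of_mem_PAfam hpdeg hA) (hdet A hA) ⟨P, hP, fun x hx hker => ?_⟩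
  rw [← dotProduct_lmiMat_mulVec_of_mulVec_eq_zero _ _ Q P hker]
  exact hneg.re_dotProduct_mulVec_neg hx

/-- Theorem 4: under hypothesis H (Lemma 1 of Henrion et al.), if
the vertex LMIs are feasible then the polytopic polynomial matrix family `PA` is
robustly `D_B`-stable. -/
theorem polytopic_family_robust_DB_stable
    (n m l : ℕ) (hn : 1 ≤ n) (hm : 1 ≤ m) (hl : 1 ≤ l)
    (B : Matrix (Fin 2) (Fin 2) ℂ) (hB : B.IsHermitian)
    (p : Fin n → Fin n → Fin m → ℝ[X])
    (hpdeg : ∀ i j t, (p i j t).degree ≤ l)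
    (hdet : ∀ M ∈ PAfam n m p, M.det ≠ 0)
    -- hypothesis H: the cited quadratic-stability lemma of Henrion et al.
    (hH : ∀ C : Matrix (Fin n) (Fin n) ℝ[X],
      (∀ i j, (C i j).degree ≤ l) → C.det ≠ 0 →
      (∃ P : Matrix (Fin l × Fin n) (Fin l × Fin n) ℂ, IsCPosDef P ∧
        ∀ x : Fin (l + 1) × Fin n → ℂ, x ≠ 0 → (coeffMat n l C).mulVec x = 0 →
          (star x ⬝ᵥ ((structR n l)ᴴ * (B ⊗ₖ P) * structR n l).mulVec x).re < 0) →
      DStable (DRegion B) C)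
    -- the vertex LMI feasibility data
    (Q : Matrix (Fin 2 × Fin l × Fin n) (Fin n) ℂ)
    (hLMI : ∀ F ∈ KPA n m p,
      ∃ P : Matrix (Fin l × Fin n) (Fin l × Fin n) ℂ, IsCPosDef P ∧
        IsCNegDef
          ((structR n l)ᴴ * (B ⊗ₖ P) * structR n l
            + (coeffMat n l F)ᴴ * Qᴴ * structR n l
            + (structR n l)ᴴ * Q * coeffMat n l F)) :
    ∀ A ∈ PAfam n m p, DStable (DRegion B) A :=
  polytopic_family_robust_DB_stable_general n m l B p hpdeg hdet hH Q hLMI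
end
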